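/- arXiv:2309.10342 — 4 statements merged into one kernel-verified Lean document; each statement's English description precedes it below -/
import Mathlib

section
/- For any real γ ≥ 0, the function f(α) = Real.log (1 + α) − α + (1 + α) * γ / (1 + γ) defined for α ≥ 0 satisfies f(α) ≤ Real.log (1 + γ) for all α ≥ 0, with equality if and only if α = γ. -/
/-- Lagrangian dual transform: for SINR `γ ≥ 0`, the function
`f(α) = log(1+α) − α + (1+α)γ/(1+γ)` satisfies `f(α) ≤ log(1+γ)` for all
`α ≥ 0`, with equality iff `α = γ`. -/
theorem stmt_4 (γ : ℝ) (hγ : 0 ≤ γ) :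
    ∀ α : ℝ, 0 ≤ α →
      (Real.log (1 + α) - α + (1 + α) * γ / (1 + γ) ≤ Real.log (1 + γ)) ∧
      (Real.log (1 + α) - α + (1 + α) * γ / (1 + γ) = Real.log (1 + γ) ↔ α = γ) := by
  intro α hα
  have h1γ : (0:ℝ) < 1 + γ := by linarith
  have h1α : (0:ℝ) < 1 + α := by linarith
  have hx : (0:ℝ) < (1 + α) / (1 + γ) := div_pos h1α h1γ
  have hlogx : Real.log ((1 + α) / (1 + γ)) = Real.log (1 + α) - Real.log (1 + γ) :=
    Real.log_div (ne_of_gt h1α) (ne_of_gt h1γ)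
  have hkey : Real.log (1 + α) - α + (1 + α) * γ / (1 + γ) - Real.log (1 + γ)
      = Real.log ((1 + α) / (1 + γ)) - ((1 + α) / (1 + γ) - 1) := by
    rw [hlogx]; field_simp; ring
  have hle := Real.log_le_sub_one_of_pos hx
  constructor
  · linarith
  constructor
  · intro heq
    by_contra hne
    have hxne : (1 + α) / (1 + γ) ≠ 1 := by
      intro h
      apply hne
      have := (div_eq_one_iff_eq (ne_of_gt h1γ)).mp h
      linarith
    have := Real.log_lt_sub_one_of_pos hx hxne
    linarith
  · intro h
    subst h
    have : (1 + α) / (1 + α) = 1 := div_self (ne_of_gt h1α)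
    rw [this] at hkey
    simp at hkey
    linarith
end

section
/- Let a ∈ ℂ and B > 0 a real number. Then sup over α ≥ 0 and β ∈ ℂ of [Real.log (1 + α) − α + 2 * Real.sqrt (1 + α) * (starRingEnd ℂ β * a).re − Complex.abs β ^ 2 * (Complex.abs a ^ 2 + B)] equals Real.log (1 + Complex.abs a ^ 2 / B); moreover every pair (α, β) with α ≥ 0 gives a value at most Real.log (1 + Complex.abs a ^ 2 / B), and equality holds at α⋆ = Complex.abs a ^ 2 / B and β⋆ = Real.sqrt (1 + α⋆) * a / (Complex.abs a ^ 2 + B). -/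
/-!
Both auxiliary variables can be eliminated in closed form. For fixed `α`, the objective is a concave
quadratic in `β`; completing the square, `‖C β - t a‖² ≥ 0` with `t = √(1 + α)` and
`C = ‖a‖² + B`, bounds it by its value `(1 + α) ‖a‖² / C` at `β = (t / C) a`. What remains,
`log (1 + α) + 1 - (1 + α) / (1 + γ)` with `γ = ‖a‖² / B`, is at most `log (1 + γ)` by
`log u ≤ u - 1` applied to `u = (1 + α) / (1 + γ)`, with equality at `α = γ`.
-/

open Real

section CompletingTheSquare

variable {E : Type*} [NormedAddCommGroup E] [InnerProductSpace ℝ E]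

theorem two_mul_inner_sub_sq_norm_mul_le (a b : E) (t : ℝ) {C : ℝ} (hC : 0 < C) :
    2 * t * inner ℝ b a - ‖b‖ ^ 2 * C ≤ t ^ 2 * ‖a‖ ^ 2 / C := by
  have hsq : 0 ≤ ‖C • b - t • a‖ ^ 2 := sq_nonneg _
  rw [norm_sub_sq_real, norm_smul, norm_smul, real_inner_smul_left, real_inner_smul_right,
    mul_pow, mul_pow, Real.norm_eq_abs, Real.norm_eq_abs, sq_abs, sq_abs] at hsq
  rw [le_div_iff₀ hC]
  nlinarith

theorem two_mul_inner_sub_sq_norm_mul_eq (a : E) (t : ℝ) {C : ℝ} (hC : C ≠ 0) :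
    2 * t * inner ℝ ((t / C) • a) a - ‖(t / C) • a‖ ^ 2 * C = t ^ 2 * ‖a‖ ^ 2 / C := by
  rw [real_inner_smul_left, real_inner_self_eq_norm_sq, norm_smul, mul_pow, Real.norm_eq_abs,
    sq_abs]
  field_simp
  ring

end CompletingTheSquare

theorem Real.log_add_one_sub_div_le {x y : ℝ} (hx : 0 < x) (hy : 0 < y) :
    log x + 1 - x / y ≤ log y := by
  have h := log_le_sub_one_of_pos (div_pos hx hy)
  rw [log_div hx.ne' hy.ne'] at h
  linarith

/-- The fractional-programming objective `g(α, β)` for the signal coefficient `a` and the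
interference-plus-noise power `B`. -/
noncomputable def fpObjective (a : ℂ) (B α : ℝ) (β : ℂ) : ℝ :=
  log (1 + α) - α + 2 * √(1 + α) * (starRingEnd ℂ β * a).re - ‖β‖ ^ 2 * (‖a‖ ^ 2 + B)

theorem fpObjective_eq (a : ℂ) (B α : ℝ) (β : ℂ) :
    fpObjective a B α β =
      log (1 + α) - α + (2 * √(1 + α) * inner ℝ β a - ‖β‖ ^ 2 * (‖a‖ ^ 2 + B)) := by
  rw [fpObjective, Complex.inner, mul_comm a]
  ring

theorem fpObjective_le_log (a : ℂ) {B : ℝ} (hB : 0 < B) {α : ℝ} (hα : -1 < α) (β : ℂ) :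
    fpObjective a B α β ≤ log (1 + ‖a‖ ^ 2 / B) := by
  have hC : 0 < ‖a‖ ^ 2 + B := by positivity
  calc fpObjective a B α β
      ≤ log (1 + α) - α + √(1 + α) ^ 2 * ‖a‖ ^ 2 / (‖a‖ ^ 2 + B) := by
        rw [fpObjective_eq]
        gcongr
        exact two_mul_inner_sub_sq_norm_mul_le a β _ hC
    _ = log (1 + α) + 1 - (1 + α) / (1 + ‖a‖ ^ 2 / B) := by
        rw [sq_sqrt (by linarith)]
        field_simp
        ring
    _ ≤ log (1 + ‖a‖ ^ 2 / B) := log_add_one_sub_div_le (by linarith) (by positivity)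

theorem fpObjective_optimal (a : ℂ) {B : ℝ} (hB : 0 < B) :
    fpObjective a B (‖a‖ ^ 2 / B)
        ((√(1 + ‖a‖ ^ 2 / B) : ℂ) * a / ((‖a‖ ^ 2 + B : ℝ) : ℂ)) =
      log (1 + ‖a‖ ^ 2 / B) := by
  have hC : ‖a‖ ^ 2 + B ≠ 0 := by positivity
  have hβ : (√(1 + ‖a‖ ^ 2 / B) : ℂ) * a / ((‖a‖ ^ 2 + B : ℝ) : ℂ) =
      (√(1 + ‖a‖ ^ 2 / B) / (‖a‖ ^ 2 + B)) • a := by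
    rw [Complex.real_smul]
    push_cast
    ring
  rw [fpObjective_eq, hβ, two_mul_inner_sub_sq_norm_mul_eq a _ hC, sq_sqrt (by positivity)]
  field_simp
  ring

/-- Combined correctness of the two FP transforms: for signal coefficient `a`
and interference-plus-noise power `B > 0`, the doubly-transformed objective is
globally upper bounded by the rate `log(1 + |a|²/B)`, attains it at
`α⋆ = |a|²/B`, `β⋆ = √(1+α⋆)·a/(|a|²+B)`, and hence its supremum over
`α ≥ 0, β ∈ ℂ` equals the rate. -/
theorem stmt_6 (a : ℂ) (B : ℝ) (hB : 0 < B) :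
    (∀ α : ℝ, 0 ≤ α → ∀ β : ℂ,
      Real.log (1 + α) - α + 2 * Real.sqrt (1 + α) * (starRingEnd ℂ β * a).re
          - ‖β‖ ^ 2 * (‖a‖ ^ 2 + B)
        ≤ Real.log (1 + ‖a‖ ^ 2 / B)) ∧
    (Real.log (1 + (‖a‖ ^ 2 / B)) - (‖a‖ ^ 2 / B)
        + 2 * Real.sqrt (1 + (‖a‖ ^ 2 / B)) *
            (starRingEnd ℂ ((Real.sqrt (1 + (‖a‖ ^ 2 / B)) : ℂ) * a
                / ((‖a‖ ^ 2 + B : ℝ) : ℂ)) * a).re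
        - ‖(Real.sqrt (1 + (‖a‖ ^ 2 / B)) : ℂ) * a
                / ((‖a‖ ^ 2 + B : ℝ) : ℂ)‖ ^ 2 * (‖a‖ ^ 2 + B)
      = Real.log (1 + ‖a‖ ^ 2 / B)) ∧
    IsGreatest
      {x : ℝ | ∃ α : ℝ, ∃ β : ℂ, 0 ≤ α ∧
        x = Real.log (1 + α) - α + 2 * Real.sqrt (1 + α) * (starRingEnd ℂ β * a).re
              - ‖β‖ ^ 2 * (‖a‖ ^ 2 + B)}
      (Real.log (1 + ‖a‖ ^ 2 / B)) := by
  have upper (α : ℝ) (hα : 0 ≤ α) (β : ℂ) := fpObjective_le_log a hB (by linarith : -1 < α) β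
  refine ⟨upper, fpObjective_optimal a hB, ⟨?_, ?_⟩⟩
  · exact ⟨_, _, by positivity, (fpObjective_optimal a hB).symm⟩
  · rintro x ⟨α, β, hα, rfl⟩
    exact upper α hα β
end

section
/- Let K ≥ 1, λ : Fin K → ℝ with λ k ≥ 0 for all k, h : Fin K → ℝ, ρ ≥ 0, and m ∈ Fin K with h m = ⨅ k, h k and h k + ρ > 0 for all k. If λ is a fixed point of the update λ' k = ((h m + ρ)/(h k + ρ)) * λ k for all k ≠ m (i.e., λ' k = λ k for all k ≠ m), then λ k * (h m − h k) = 0 for every k ∈ Fin K. -/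
/-- Fixed-point property of the HFPI λ-update (17a): at a fixed point of the
iteration with nonnegative dual variables, `λ k * (h m − h k) = 0` for every
`k`, i.e. complementary slackness holds. -/
theorem stmt_14 (K : ℕ) (hK : 1 ≤ K) (lam h : Fin K → ℝ)
    (hlam : ∀ k, 0 ≤ lam k) (ρ : ℝ) (hρ : 0 ≤ ρ) (m : Fin K)
    (hm : h m = ⨅ k, h k) (hh : ∀ k, 0 < h k + ρ)
    (hfix : ∀ k, k ≠ m → ((h m + ρ) / (h k + ρ)) * lam k = lam k) :
    ∀ k, lam k * (h m - h k) = 0 := by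
  intro k
  by_cases hkm : k = m
  · simp [hkm]
  · rcases eq_or_lt_of_le (hlam k) with h0 | h0
    · simp [← h0]
    · have hfx := hfix k hkm
      have hdiv : (h m + ρ) / (h k + ρ) = 1 := by
        have := mul_right_cancel₀ (ne_of_gt h0) (hfx.trans (one_mul (lam k)).symm)
        exact this
      have : h m = h k := by
        have := (div_eq_one_iff_eq (ne_of_gt (hh k))).mp hdiv
        linarith
      simp [this]
end

section
/- Let K ≥ 1, δ : Fin K → ℝ nonnegative weights, r₀ : Fin K → ℝ nonnegative, and rp : Fin K → ℝ. Then the supremum over allocations c : Fin K → ℝ with c k ≥ 0 for all k and (∑ i, c i) ≤ r₀ k for all k of ∑ k, δ k * (c k + rp k) equals (⨆ k, δ k) * (⨅ k, r₀ k) + ∑ k, δ k * rp k. -/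
/-- Equivalence of problems (3) and (6): for fixed beamforming, the supremum
over feasible common rate allocations `c` of `∑ k, δ k * (c k + rp k)` equals
`(⨆ k, δ k) * (⨅ k, r₀ k) + ∑ k, δ k * rp k`. -/
theorem stmt_16 (K : ℕ) (hK : 1 ≤ K) (δ r₀ rp : Fin K → ℝ)
    (hδ : ∀ k, 0 ≤ δ k) (hr₀ : ∀ k, 0 ≤ r₀ k) :
    sSup {x : ℝ | ∃ c : Fin K → ℝ,
        (∀ k, 0 ≤ c k) ∧ (∀ k, (∑ i, c i) ≤ r₀ k) ∧
        x = ∑ k, δ k * (c k + rp k)}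
      = (⨆ k, δ k) * (⨅ k, r₀ k) + ∑ k, δ k * rp k := by
  haveI : Nonempty (Fin K) := ⟨⟨0, hK⟩⟩
  obtain ⟨kM, hkM⟩ := Finite.exists_max δ
  obtain ⟨km, hkm⟩ := Finite.exists_min r₀
  have hsup : (⨆ k, δ k) = δ kM :=
    le_antisymm (ciSup_le hkM) (le_ciSup (Finite.bddAbove_range δ) kM)
  have hinf : (⨅ k, r₀ k) = r₀ km :=
    le_antisymm (ciInf_le (Finite.bddBelow_range r₀) km) (le_ciInf hkm)
  rw [hsup, hinf]
  set c0 : Fin K → ℝ := fun k => if k = kM then r₀ km else 0 with hc0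
  have hsum0 : (∑ i, c0 i) = r₀ km := by simp [hc0]
  have hmem : (δ kM * r₀ km + ∑ k, δ k * rp k) ∈
      {x : ℝ | ∃ c : Fin K → ℝ,
        (∀ k, 0 ≤ c k) ∧ (∀ k, (∑ i, c i) ≤ r₀ k) ∧
        x = ∑ k, δ k * (c k + rp k)} := by
    refine ⟨c0, fun k => ?_, fun k => ?_, ?_⟩
    · by_cases h : k = kM <;> simp [hc0, h, hr₀]
    · rw [hsum0]; exact hkm k
    · have : (∑ k, δ k * (c0 k + rp k)) = (∑ k, δ k * c0 k) + ∑ k, δ k * rp k := by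
        rw [← Finset.sum_add_distrib]; congr 1; ext k; ring
      rw [this]
      congr 1
      simp [hc0, mul_ite]
  apply le_antisymm
  · apply csSup_le ⟨_, hmem⟩
    rintro x ⟨c, hc0', hcle, rfl⟩
    have h1 : (∑ k, δ k * (c k + rp k)) = (∑ k, δ k * c k) + ∑ k, δ k * rp k := by
      rw [← Finset.sum_add_distrib]; congr 1; ext k; ring
    rw [h1]
    gcongr
    calc (∑ k, δ k * c k) ≤ ∑ k, δ kM * c k := by
          apply Finset.sum_le_sum
          intro i _
          exact mul_le_mul_of_nonneg_right (hkM i) (hc0' i)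
      _ = δ kM * ∑ k, c k := by rw [Finset.mul_sum]
      _ ≤ δ kM * r₀ km := mul_le_mul_of_nonneg_left (hcle km) (hδ kM)
  · apply le_csSup ?_ hmem
    refine ⟨δ kM * r₀ km + ∑ k, δ k * rp k, ?_⟩
    rintro x ⟨c, hc0', hcle, rfl⟩
    have h1 : (∑ k, δ k * (c k + rp k)) = (∑ k, δ k * c k) + ∑ k, δ k * rp k := by
      rw [← Finset.sum_add_distrib]; congr 1; ext k; ring
    rw [h1]
    gcongr
    calc (∑ k, δ k * c k) ≤ ∑ k, δ kM * c k := by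
          apply Finset.sum_le_sum
          intro i _
          exact mul_le_mul_of_nonneg_right (hkM i) (hc0' i)
      _ = δ kM * ∑ k, c k := by rw [Finset.mul_sum]
      _ ≤ δ kM * r₀ km := mul_le_mul_of_nonneg_left (hcle km) (hδ kM)
end
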